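/- Let Γ be a simple graph, G a group, ζ a voltage assignment on Γ with values in G, φ a graph automorphism of Γ, and f a group automorphism of G. If ζ(d^φ) = f(ζ(d)) for every dart d of Γ (where φ acts on darts by acting on both endpoints), then the map φ' : (u, g) ↦ (u^φ, f(g)) is a graph automorphism of the derived cover Cov(Γ, ζ), and π ∘ φ' = φ ∘ π where π is the covering projection; that is, φ' is a lift of φ. -/

import Mathlib

/-- The derived cover of a voltage graph `(Γ, ζ)`. -/
def GCov {V : Type*} (Γ : SimpleGraph V) {G : Type*} [Group G] (ζ : Γ.Dart → G)
    (hζ : ∀ d : Γ.Dart, ζ d.symm = (ζ d)⁻¹) : SimpleGraph (V × G) where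
  Adj p q := ∃ d : Γ.Dart, d.fst = p.1 ∧ d.snd = q.1 ∧ q.2 = ζ d * p.2
  symm := by
    constructor
    rintro p q ⟨d, h1, h2, h3⟩
    refine ⟨d.symm, h2, h1, ?_⟩
    rw [hζ, h3, inv_mul_cancel_left]
  loopless := by
    constructor
    rintro p ⟨d, h1, h2, h3⟩
    have := d.adj
    rw [h1, h2] at this
    exact Γ.loopless.irrefl p.1 this

/-- The canonical double cover of a simple graph. -/
def CanonicalDoubleCover {V : Type*} (Γ : SimpleGraph V) : SimpleGraph (V × ZMod 2) where
  Adj p q := Γ.Adj p.1 q.1 ∧ q.2 = p.2 + 1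
  symm := by
    constructor
    rintro p q ⟨h1, h2⟩
    refine ⟨h1.symm, ?_⟩
    have h : (1 : ZMod 2) + 1 = 0 := by decide
    rw [h2, add_assoc, h, add_zero]
  loopless := by
    constructor
    rintro p ⟨h1, _⟩
    exact Γ.loopless.irrefl p.1 h1

/-- A graph automorphism compatible through a group automorphism with the voltages lifts
to an automorphism of the derived cover. -/
theorem stmt17 {V : Type*} {G : Type*} [Group G]
    (Γ : SimpleGraph V) (ζ : Γ.Dart → G) (hζ : ∀ d : Γ.Dart, ζ d.symm = (ζ d)⁻¹)
    (φ : Γ ≃g Γ) (f : G ≃* G)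
    (hcompat : ∀ d : Γ.Dart,
      ζ ⟨(φ d.fst, φ d.snd), φ.map_adj_iff.mpr d.adj⟩ = f (ζ d)) :
    ∃ ψ : GCov Γ ζ hζ ≃g GCov Γ ζ hζ, ∀ p : V × G, ψ p = (φ p.1, f p.2) := by
  refine ⟨⟨Equiv.prodCongr φ.toEquiv f.toEquiv, ?_⟩, fun p => rfl⟩
  rintro ⟨u, g⟩ ⟨v, h⟩
  simp only [Equiv.prodCongr_apply, Prod.map]
  constructor
  · rintro ⟨d', h1, h2, h3⟩
    have hadj : Γ.Adj u v := by
      have := d'.adj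
      rw [h1, h2] at this
      exact φ.map_adj_iff.mp this
    refine ⟨⟨(u, v), hadj⟩, rfl, rfl, ?_⟩
    have hd' : d' = ⟨(φ u, φ v), φ.map_adj_iff.mpr hadj⟩ := by
      apply SimpleGraph.Dart.ext
      exact Prod.ext h1 h2
    rw [hd', hcompat ⟨(u, v), hadj⟩] at h3
    exact f.injective (by simpa [map_mul] using h3)
  · rintro ⟨d, h1, h2, h3⟩
    refine ⟨⟨(φ d.fst, φ d.snd), φ.map_adj_iff.mpr d.adj⟩, by simp [h1], by simp [h2], ?_⟩
    simp only [hcompat d]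
    simp only at h3
    show f h = f (ζ d) * f g
    rw [h3, map_mul]
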